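/- For any nonzero ν ∈ R^{2n}, the symbol sequence 0 → S+ →^{σ_0} C²⊗S− →^{σ_1} C²⊗S+ →^{σ_2} S− → 0 is exact, where σ_0(ν)η = (ν_0 η, ν_1 η), σ_1(ν)(ξ_0, ξ_1) = (ν_0 ν_0 ξ_1 - ν_1 ν_0 ξ_0, ν_0 ν_1 ξ_1 - ν_1 ν_1 ξ_0), and σ_2(ν)(ζ_0, ζ_1) = ν_0 ζ_1 - ν_1 ζ_0. In particular the Dirac complex of two vector variables is elliptic. -/

import Mathlib

noncomputable section

variable {n : ℕ} {Sp Sm : Type*}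
  [AddCommGroup Sp] [Module ℂ Sp] [AddCommGroup Sm] [Module ℂ Sm]

/-- The symbol `ν_A = -i Σ_j γ_j ν_{Aj}` (on `S⁺`, valued in `S⁻`). -/
def nuP (γp : Fin n → Sp →ₗ[ℂ] Sm) (ν : Fin 2 × Fin n → ℝ) (A : Fin 2) (x : Sp) : Sm :=
  (-Complex.I) • ∑ j, ((ν (A, j) : ℂ) • γp j x)

/-- The symbol `ν_A = -i Σ_j γ_j ν_{Aj}` (on `S⁻`, valued in `S⁺`). -/
def nuM (γm : Fin n → Sm →ₗ[ℂ] Sp) (ν : Fin 2 × Fin n → ℝ) (A : Fin 2) (y : Sm) : Sp :=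
  (-Complex.I) • ∑ j, ((ν (A, j) : ℂ) • γm j y)

/-- The Clifford relations `γ_j γ_k + γ_k γ_j = -2 δ_{jk}` for gamma matrices `γ_j : S± → S∓`. -/
def CliffordRelPM (γp : Fin n → Sp →ₗ[ℂ] Sm) (γm : Fin n → Sm →ₗ[ℂ] Sp) : Prop :=
  (∀ j k : Fin n, ∀ x : Sp,
      γm j (γp k x) + γm k (γp j x) = if j = k then (-2 : ℂ) • x else 0) ∧
  (∀ j k : Fin n, ∀ y : Sm,
      γp j (γm k y) + γp k (γm j y) = if j = k then (-2 : ℂ) • y else 0)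

/-- The symbol `σ_0(ν) η = (ν_0 η, ν_1 η)`. -/
def sigma0 (γp : Fin n → Sp →ₗ[ℂ] Sm) (ν : Fin 2 × Fin n → ℝ) (η : Sp) : Sm × Sm :=
  (nuP γp ν 0 η, nuP γp ν 1 η)

/-- The symbol `σ_1(ν)(ξ_0, ξ_1) = (ν_0 ν_0 ξ_1 - ν_1 ν_0 ξ_0, ν_0 ν_1 ξ_1 - ν_1 ν_1 ξ_0)`. -/
def sigma1 (γp : Fin n → Sp →ₗ[ℂ] Sm) (γm : Fin n → Sm →ₗ[ℂ] Sp)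
    (ν : Fin 2 × Fin n → ℝ) (ξ : Sm × Sm) : Sm × Sm :=
  (nuP γp ν 0 (nuM γm ν 0 ξ.2) - nuP γp ν 1 (nuM γm ν 0 ξ.1),
   nuP γp ν 0 (nuM γm ν 1 ξ.2) - nuP γp ν 1 (nuM γm ν 1 ξ.1))

/-- The symbol `σ_2(ν)(ζ_0, ζ_1) = ν_0 ζ_1 - ν_1 ζ_0`. -/
def sigma2 (γm : Fin n → Sm →ₗ[ℂ] Sp) (ν : Fin 2 × Fin n → ℝ) (ζ : Sm × Sm) : Sp :=
  nuM γm ν 0 ζ.2 - nuM γm ν 1 ζ.1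

/-! The Clifford relations give `ν_A ν_A = |ν_A|²` on `S⁺` and on `S⁻`, and
`|ν_0|² + |ν_1|² = |ν|² ≠ 0`. Exactness then holds for any linear maps `P_A : V → W`,
`M_A : W → V` with `M_A P_A = a_A` and `P_A M_A = a_A` for scalars with `a_0 + a_1 ≠ 0`:
with `s = (a_0 + a_1)⁻¹`, a preimage of a cycle `ξ` at the first spot is `s (M_0 ξ_0 + M_1 ξ_1)`,
of a cycle `ζ` at the second `s (-ζ_1, ζ_0)`, and of `x` under the last map `s (-P_1 x, P_0 x)`. -/

section ScalarInverses

variable {K V W : Type*} [Field K] [AddCommGroup V] [Module K V] [AddCommGroup W] [Module K W]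
  {P₀ P₁ : V →ₗ[K] W} {M₀ M₁ : W →ₗ[K] V} {a b : K}

theorem injective_pair_of_comp_eq_smul (hMP₀ : ∀ x, M₀ (P₀ x) = a • x)
    (hMP₁ : ∀ x, M₁ (P₁ x) = b • x) (hab : a + b ≠ 0) :
    Function.Injective fun x => (P₀ x, P₁ x) := by
  refine Function.LeftInverse.injective
    (g := fun ξ : W × W => (a + b)⁻¹ • (M₀ ξ.1 + M₁ ξ.2)) fun x => ?_
  simp only [hMP₀, hMP₁, ← add_smul, smul_smul, inv_mul_cancel₀ hab, one_smul]

theorem exact_pair_of_comp_eq_smul (hMP₀ : ∀ x, M₀ (P₀ x) = a • x)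
    (hMP₁ : ∀ x, M₁ (P₁ x) = b • x) (hPM₀ : ∀ y, P₀ (M₀ y) = a • y)
    (hPM₁ : ∀ y, P₁ (M₁ y) = b • y) (hab : a + b ≠ 0) :
    Function.Exact (fun x => (P₀ x, P₁ x))
      (fun ξ : W × W => (P₀ (M₀ ξ.2) - P₁ (M₀ ξ.1), P₀ (M₁ ξ.2) - P₁ (M₁ ξ.1))) := by
  intro ξ
  constructor
  · intro h
    simp only [Prod.mk_eq_zero, sub_eq_zero, hPM₀, hPM₁] at h
    obtain ⟨h₀, h₁⟩ := h
    refine ⟨(a + b)⁻¹ • (M₀ ξ.1 + M₁ ξ.2), Prod.ext ?_ ?_⟩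
    · simp only [map_smul, map_add, hPM₀, h₁, ← add_smul, smul_smul, inv_mul_cancel₀ hab,
        one_smul]
    · simp only [map_smul, map_add, ← h₀, hPM₁, ← add_smul, smul_smul, inv_mul_cancel₀ hab,
        one_smul]
  · rintro ⟨x, rfl⟩
    simp [hMP₀, hMP₁, hPM₀, hPM₁]

theorem exact_sub_of_comp_eq_smul (hMP₀ : ∀ x, M₀ (P₀ x) = a • x)
    (hMP₁ : ∀ x, M₁ (P₁ x) = b • x) (hPM₀ : ∀ y, P₀ (M₀ y) = a • y)
    (hPM₁ : ∀ y, P₁ (M₁ y) = b • y) (hab : a + b ≠ 0) :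
    Function.Exact
      (fun ξ : W × W => (P₀ (M₀ ξ.2) - P₁ (M₀ ξ.1), P₀ (M₁ ξ.2) - P₁ (M₁ ξ.1)))
      (fun ζ : W × W => M₀ ζ.2 - M₁ ζ.1) := by
  intro ζ
  constructor
  · intro h
    rw [sub_eq_zero] at h
    refine ⟨(a + b)⁻¹ • (-ζ.2, ζ.1), Prod.ext ?_ ?_⟩
    · simp only [Prod.smul_fst, Prod.smul_snd, map_smul, map_neg, h, hPM₀, hPM₁]
      match_scalars
      field_simp
      ring
    · simp only [Prod.smul_fst, Prod.smul_snd, map_smul, map_neg, ← h, hPM₀, hPM₁]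
      match_scalars
      field_simp
      ring
  · rintro ⟨ξ, rfl⟩
    simp [hMP₀, hMP₁, hPM₀, hPM₁]

theorem surjective_sub_of_comp_eq_smul (hMP₀ : ∀ x, M₀ (P₀ x) = a • x)
    (hMP₁ : ∀ x, M₁ (P₁ x) = b • x) (hab : a + b ≠ 0) :
    Function.Surjective fun ζ : W × W => M₀ ζ.2 - M₁ ζ.1 := by
  refine Function.RightInverse.surjective
    (g := fun x => (a + b)⁻¹ • (-P₁ x, P₀ x)) fun x => ?_
  simp only [Prod.smul_fst, Prod.smul_snd, map_smul, map_neg, hMP₀, hMP₁]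
  match_scalars
  field_simp
  ring

end ScalarInverses

theorem two_smul_sum_sum_mul_smul {ι R V : Type*} [Fintype ι] [DecidableEq ι] [CommSemiring R]
    [AddCommMonoid V] [Module R V] (c : ι → R) (G : ι → ι → V) (E : V)
    (hG : ∀ j k, G j k + G k j = if j = k then E else 0) :
    (2 : R) • ∑ j, ∑ k, (c j * c k) • G j k = (∑ j, c j ^ 2) • E := by
  calc (2 : R) • ∑ j, ∑ k, (c j * c k) • G j k
      = ∑ j, ∑ k, (c j * c k) • G j k + ∑ j, ∑ k, (c j * c k) • G k j := by
        rw [two_smul, Finset.sum_comm (f := fun j k => (c j * c k) • G k j)]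
        simp only [mul_comm]
    _ = ∑ j, ∑ k, (c j * c k) • (G j k + G k j) := by
        simp only [smul_add, Finset.sum_add_distrib]
    _ = (∑ j, c j ^ 2) • E := by
        simp [hG, Finset.sum_smul, sq]

def nuPₗ (γ : Fin n → Sp →ₗ[ℂ] Sm) (ν : Fin 2 × Fin n → ℝ) (A : Fin 2) : Sp →ₗ[ℂ] Sm :=
  (-Complex.I) • ∑ j, (ν (A, j) : ℂ) • γ j

theorem coe_nuPₗ (γ : Fin n → Sp →ₗ[ℂ] Sm) (ν : Fin 2 × Fin n → ℝ) (A : Fin 2) :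
    ⇑(nuPₗ γ ν A) = nuP γ ν A := by
  ext x
  simp [nuPₗ, nuP, LinearMap.sum_apply]

theorem nuM_eq_nuP (γ : Fin n → Sm →ₗ[ℂ] Sp) : nuM γ = nuP γ := rfl

theorem nuPₗ_nuPₗ_self (γ : Fin n → Sp →ₗ[ℂ] Sm) (γ' : Fin n → Sm →ₗ[ℂ] Sp)
    (hγ : ∀ j k x, γ' j (γ k x) + γ' k (γ j x) = if j = k then (-2 : ℂ) • x else 0)
    (ν : Fin 2 × Fin n → ℝ) (A : Fin 2) (x : Sp) :
    nuPₗ γ' ν A (nuPₗ γ ν A x) = ((∑ j, ν (A, j) ^ 2 : ℝ) : ℂ) • x := by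
  have h2 := two_smul_sum_sum_mul_smul (fun j => (ν (A, j) : ℂ)) (fun j k => γ' j (γ k x)) _
    (hγ · · x)
  have expand : nuPₗ γ' ν A (nuPₗ γ ν A x)
      = -∑ j, ∑ k, ((ν (A, j) : ℂ) * ν (A, k)) • γ' j (γ k x) := by
    simp only [coe_nuPₗ, nuP, map_smul, map_sum, Finset.smul_sum, smul_smul,
      ← Finset.sum_neg_distrib, ← neg_smul]
    rw [Finset.sum_comm]
    refine Finset.sum_congr rfl fun j _ => Finset.sum_congr rfl fun k _ => ?_
    congr 1
    linear_combination ((ν (A, j) : ℂ) * ν (A, k)) * Complex.I_sq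
  apply smul_right_injective Sp (two_ne_zero (α := ℂ))
  simp only [expand, smul_neg, h2]
  push_cast
  module

/-- For any nonzero `ν ∈ ℝ^{2n}`, the symbol sequence
`0 → S⁺ →^{σ_0} ℂ²⊗S∓ →^{σ_1} ℂ²⊗S∓ →^{σ_2} S∓ → 0` is exact: `σ_0` is injective,
`ker σ_1 = Im σ_0`, `ker σ_2 = Im σ_1`, and `σ_2` is surjective.  In particular the
Dirac complex of two vector variables is elliptic. -/
theorem stmt9 (γp : Fin n → Sp →ₗ[ℂ] Sm) (γm : Fin n → Sm →ₗ[ℂ] Sp)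
    (hγ : CliffordRelPM γp γm) (ν : Fin 2 × Fin n → ℝ) (hν : ν ≠ 0) :
    Function.Injective (sigma0 γp ν) ∧
    (∀ ξ : Sm × Sm, sigma1 γp γm ν ξ = 0 ↔ ∃ η : Sp, sigma0 γp ν η = ξ) ∧
    (∀ ζ : Sm × Sm, sigma2 γm ν ζ = 0 ↔ ∃ ξ : Sm × Sm, sigma1 γp γm ν ξ = ζ) ∧
    Function.Surjective (sigma2 γm ν) := by
  obtain ⟨hMP, hPM⟩ := hγ
  have hab : ((∑ j, ν (0, j) ^ 2 : ℝ) : ℂ) + ((∑ j, ν (1, j) ^ 2 : ℝ) : ℂ) ≠ 0 := by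
    have : ∑ p, ν p ^ 2 ≠ 0 := by
      simpa [sq, Finset.sum_mul_self_eq_zero_iff, funext_iff] using hν
    rw [Fintype.sum_prod_type, Fin.sum_univ_two] at this
    exact_mod_cast this
  have hνP := nuPₗ_nuPₗ_self γp γm hMP ν
  have hνM := nuPₗ_nuPₗ_self γm γp hPM ν
  unfold sigma0 sigma1 sigma2
  simp only [nuM_eq_nuP, ← coe_nuPₗ]
  exact ⟨injective_pair_of_comp_eq_smul (hνP 0) (hνP 1) hab,
    exact_pair_of_comp_eq_smul (hνP 0) (hνP 1) (hνM 0) (hνM 1) hab,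
    exact_sub_of_comp_eq_smul (hνP 0) (hνP 1) (hνM 0) (hνM 1) hab,
    surjective_sub_of_comp_eq_smul (hνP 0) (hνP 1) hab⟩
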